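/- arXiv:2403.16932 — 4 statements merged into one kernel-verified Lean document; each statement's English description precedes it below -/
import Mathlib

section
/- Let k ≥ 4. The function f̃(t; k) = (1+t)^k + (1-t)^k + (1+√(1-t²))^k + (1-√(1-t²))^k is U-shaped on [0,1] around 1/√2: f̃'(t;k) < 0 for t ∈ (0, 1/√2), f̃'(1/√2;k) = 0, and f̃'(t;k) > 0 for t ∈ (1/√2, 1). Consequently f̃(t;k) attains its global minimum on [0,1] at t = 1/√2. -/
/-!
Writing `s = √(1 - t²)` and `g(u) = (1 + u)^(k-1) - (1 - u)^(k-1)`, the derivative is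
`f̃'(t) = (k / s) · (s · g(t) - t · g(s))`. Since `g(u) / u` is a polynomial in `u²` with
nonnegative coefficients and a positive `u²`-coefficient `2·C(k-1, 3)`, it is strictly increasing
on `(0, ∞)`; so the sign of `f̃'(t)` is the sign of `t - s`, which changes exactly at `t = 1/√2`.
-/

open Real Set Finset

def powDiff (m : ℕ) (u : ℝ) : ℝ := (1 + u) ^ m - (1 - u) ^ m

noncomputable def fTilde (k : ℕ) (t : ℝ) : ℝ :=
  (1 + t) ^ k + (1 - t) ^ k + (1 + √(1 - t ^ 2)) ^ k + (1 - √(1 - t ^ 2)) ^ k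

lemma powDiff_eq_sum (m : ℕ) (u : ℝ) :
    powDiff m u = ∑ i ∈ range (m + 1), (1 - (-1) ^ i) * m.choose i * u ^ i := by
  rw [powDiff, add_comm (1 : ℝ) u, show (1 : ℝ) - u = -u + 1 by ring, add_pow, add_pow,
    ← sum_sub_distrib]
  refine sum_congr rfl fun i _ => ?_
  rw [neg_pow]
  ring

lemma mul_powDiff_lt_mul_powDiff {m : ℕ} (hm : 3 ≤ m) {t s : ℝ} (ht : 0 < t) (hts : t < s) :
    s * powDiff m t < t * powDiff m s := by
  have hs : 0 < s := ht.trans hts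
  rw [powDiff_eq_sum, powDiff_eq_sum, mul_sum, mul_sum]
  apply sum_lt_sum
  · intro i _
    have hcoeff : 0 ≤ (1 - (-1 : ℝ) ^ i) * m.choose i := by
      have hsign : (-1 : ℝ) ^ i ≤ 1 :=
        (neg_one_pow_eq_or ℝ i).elim (·.le) fun h => by rw [h]; norm_num
      exact mul_nonneg (by linarith) (Nat.cast_nonneg _)
    rcases i with _ | j
    · simp
    · have hpow : t ^ j ≤ s ^ j := pow_le_pow_left₀ ht.le hts.le j
      have hterm : s * t ^ (j + 1) ≤ t * s ^ (j + 1) := by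
        rw [pow_succ, pow_succ]
        nlinarith [mul_le_mul_of_nonneg_left hpow (mul_pos ht hs).le]
      nlinarith
  · refine ⟨3, mem_range.mpr (by omega), ?_⟩
    have hchoose : (0 : ℝ) < m.choose 3 := by exact_mod_cast Nat.choose_pos hm
    nlinarith [mul_pos (mul_pos hchoose (mul_pos ht hs)) (mul_pos (sub_pos.2 hts) (add_pos ht hs))]

lemma hasDerivAt_fTilde (k : ℕ) {t : ℝ} (ht : t ^ 2 < 1) :
    HasDerivAt (fTilde k)
      (k / √(1 - t ^ 2) * (√(1 - t ^ 2) * powDiff (k - 1) t - t * powDiff (k - 1) (√(1 - t ^ 2))))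
      t := by
  set s := √(1 - t ^ 2)
  have hpos : 0 < 1 - t ^ 2 := by linarith
  have hs : 0 < s := Real.sqrt_pos.mpr hpos
  have hsqrt : HasDerivAt (fun x : ℝ => √(1 - x ^ 2)) (-t / s) t := by
    refine ((Real.hasDerivAt_sqrt hpos.ne').comp t
      (by simpa using (hasDerivAt_pow 2 t).const_sub 1)).congr_deriv ?_
    field_simp
    ring
  have hA : HasDerivAt (fun x : ℝ => (1 + x) ^ k) (k * (1 + t) ^ (k - 1)) t := by
    simpa using ((hasDerivAt_id t).const_add 1).fun_pow k
  have hB : HasDerivAt (fun x : ℝ => (1 - x) ^ k) (-(k * (1 - t) ^ (k - 1))) t := by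
    simpa using ((hasDerivAt_id t).const_sub 1).fun_pow k
  refine (((hA.add hB).add ((hsqrt.const_add 1).pow k)).add
    ((hsqrt.const_sub 1).pow k)).congr_deriv ?_
  rw [powDiff, powDiff]
  field_simp
  ring

lemma continuous_fTilde (k : ℕ) : Continuous (fTilde k) := by
  unfold fTilde
  fun_prop

lemma deriv_fTilde_neg {k : ℕ} (hk : 4 ≤ k) {t : ℝ} (ht : 0 < t) (hts : t < √(1 - t ^ 2)) :
    deriv (fTilde k) t < 0 := by
  have ht1 : t < 1 := hts.trans_le (Real.sqrt_le_one.mpr (by nlinarith))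
  have hs : 0 < √(1 - t ^ 2) := ht.trans hts
  rw [(hasDerivAt_fTilde k (by nlinarith)).deriv]
  have hkey := mul_powDiff_lt_mul_powDiff (m := k - 1) (by omega) ht hts
  exact mul_neg_of_pos_of_neg (by positivity) (by linarith)

lemma deriv_fTilde_pos {k : ℕ} (hk : 4 ≤ k) {t : ℝ} (ht1 : t < 1) (hst : √(1 - t ^ 2) < t) :
    0 < deriv (fTilde k) t := by
  have hs : 0 < √(1 - t ^ 2) := Real.sqrt_pos.mpr (by nlinarith [Real.sqrt_nonneg (1 - t ^ 2)])
  rw [(hasDerivAt_fTilde k (by nlinarith)).deriv]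
  have hkey := mul_powDiff_lt_mul_powDiff (m := k - 1) (by omega) hs hst
  exact mul_pos (by positivity) (by linarith)

lemma isMinOn_Icc_of_deriv_neg_of_deriv_pos {f : ℝ → ℝ} {a b c : ℝ} (hf : ContinuousOn f (Icc a b))
    (hc : c ∈ Icc a b) (hneg : ∀ x ∈ Ioo a c, deriv f x < 0)
    (hpos : ∀ x ∈ Ioo c b, 0 < deriv f x) : IsMinOn f (Icc a b) c := by
  have hanti : AntitoneOn f (Icc a c) := (strictAntiOn_of_deriv_neg (convex_Icc a c)
    (hf.mono (Icc_subset_Icc_right hc.2)) (by rwa [interior_Icc])).antitoneOn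
  have hmono : MonotoneOn f (Icc c b) := (strictMonoOn_of_deriv_pos (convex_Icc c b)
    (hf.mono (Icc_subset_Icc_left hc.1)) (by rwa [interior_Icc])).monotoneOn
  refine isMinOn_iff.mpr fun x hx => ?_
  rcases le_total x c with hxc | hcx
  · exact hanti ⟨hx.1, hxc⟩ ⟨hc.1, le_rfl⟩ hxc
  · exact hmono ⟨le_rfl, hc.2⟩ ⟨hcx, hx.2⟩ hcx

/-- For `k ≥ 4`, `f̃(t;k) = (1+t)^k + (1-t)^k + (1+√(1-t²))^k + (1-√(1-t²))^k` is
U-shaped on `[0,1]` around `1/√2`: `f̃' < 0` on `(0,1/√2)`, `f̃'(1/√2) = 0`, `f̃' > 0`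
on `(1/√2,1)`; consequently `f̃` attains its global minimum on `[0,1]` at `1/√2`. -/
theorem stmt10 (k : ℕ) (hk : 4 ≤ k)
    (f : ℝ → ℝ)
    (hdef : ∀ t, f t = (1 + t) ^ k + (1 - t) ^ k +
      (1 + Real.sqrt (1 - t ^ 2)) ^ k + (1 - Real.sqrt (1 - t ^ 2)) ^ k) :
    (∀ t ∈ Ioo (0 : ℝ) (1 / Real.sqrt 2), deriv f t < 0) ∧
    deriv f (1 / Real.sqrt 2) = 0 ∧
    (∀ t ∈ Ioo (1 / Real.sqrt 2) (1 : ℝ), 0 < deriv f t) ∧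
    (∀ t ∈ Icc (0 : ℝ) 1, f (1 / Real.sqrt 2) ≤ f t) := by
  obtain rfl : f = fTilde k := funext hdef
  rw [one_div, ← Real.sqrt_inv]
  have hsq : √2⁻¹ ^ 2 = 2⁻¹ := Real.sq_sqrt (by norm_num)
  have hfix : √(1 - √2⁻¹ ^ 2) = √2⁻¹ := by rw [hsq]; norm_num
  have hlt_one : √2⁻¹ < 1 := by
    simpa using Real.sqrt_lt_sqrt (by norm_num) (show (2⁻¹ : ℝ) < 1 by norm_num)
  have hneg : ∀ t ∈ Ioo 0 √2⁻¹, deriv (fTilde k) t < 0 := fun t ⟨ht, htc⟩ =>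
    deriv_fTilde_neg hk ht <| (Real.lt_sqrt ht.le).mpr <| by
      nlinarith [(Real.lt_sqrt ht.le).mp htc]
  have hpos : ∀ t ∈ Ioo √2⁻¹ 1, 0 < deriv (fTilde k) t := fun t ⟨hct, ht1⟩ =>
    have ht : 0 < t := (Real.sqrt_nonneg _).trans_lt hct
    deriv_fTilde_pos hk ht1 <| (Real.sqrt_lt' ht).mpr <| by
      nlinarith [(Real.sqrt_lt' ht).mp hct]
  refine ⟨hneg, ?_, hpos, fun t ht => ?_⟩
  · rw [(hasDerivAt_fTilde k (by rw [hsq]; norm_num)).deriv, hfix, sub_self, mul_zero]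
  · exact isMinOn_iff.mp (isMinOn_Icc_of_deriv_neg_of_deriv_pos (continuous_fTilde k).continuousOn
      ⟨by positivity, hlt_one.le⟩ hneg hpos) t ht
end

section
/- Let k ≥ 4 and f̃(t;k) = (1+t)^k + (1-t)^k + (1+√(1-t²))^k + (1-√(1-t²))^k. Then for all t ∈ [0,1]: 2·((1 + 1/√2)^k + (1 - 1/√2)^k) ≤ f̃(t;k) ≤ 2^k + 2, with the lower bound attained at t = 1/√2 and the upper bound at t = 0 and t = 1. -/
/-!
Put `P u := (1 + √u)^k + (1 - √u)^k`. Expanding binomially, the odd powers of `√u` cancel, so `P` is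
a polynomial in `u` with nonnegative coefficients, hence convex on `[0, ∞)`; and
`f̃(t;k) = P(t²) + P(1 - t²)`. For a convex `P` on `[0, 1]` the symmetrisation `P u + P (1 - u)` lies
between its value `2 P(1/2)` at the midpoint and the chord value `P 0 + P 1 = 2 + 2^k`.
-/

open Real Set

lemma convexOn_sum_mul_pow {ι : Type*} (t : Finset ι) {c : ι → ℝ} (e : ι → ℕ)
    (hc : ∀ i ∈ t, 0 ≤ c i) :
    ConvexOn ℝ (Ici 0) (fun u : ℝ => ∑ i ∈ t, c i * u ^ e i) := by
  classical
  induction t using Finset.induction_on with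
  | empty => simpa using convexOn_const (0 : ℝ) (convex_Ici 0)
  | insert i t hi ih =>
    simp only [Finset.sum_insert hi]
    exact ((convexOn_pow (e i)).smul (hc i (Finset.mem_insert_self i t))).add
      (ih fun j hj => hc j (Finset.mem_insert_of_mem hj))

lemma ConvexOn.two_mul_half_le_add_one_sub {g : ℝ → ℝ} (hg : ConvexOn ℝ (Icc 0 1) g) {u : ℝ}
    (hu : u ∈ Icc 0 1) : 2 * g (1 / 2) ≤ g u + g (1 - u) := by
  have hu' : 1 - u ∈ Icc (0 : ℝ) 1 := ⟨by linarith [hu.2], by linarith [hu.1]⟩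
  have := hg.2 hu hu' (by norm_num : (0 : ℝ) ≤ 1 / 2) (by norm_num : (0 : ℝ) ≤ 1 / 2) (by norm_num)
  simp only [smul_eq_mul] at this
  rw [show 1 / 2 * u + 1 / 2 * (1 - u) = (1 / 2 : ℝ) by ring] at this
  linarith

lemma ConvexOn.add_one_sub_le {g : ℝ → ℝ} (hg : ConvexOn ℝ (Icc 0 1) g) {u : ℝ}
    (hu : u ∈ Icc 0 1) : g u + g (1 - u) ≤ g 0 + g 1 := by
  have h0 : (0 : ℝ) ∈ Icc 0 1 := left_mem_Icc.mpr zero_le_one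
  have h1 : (1 : ℝ) ∈ Icc 0 1 := right_mem_Icc.mpr zero_le_one
  have hl := hg.2 h0 h1 (sub_nonneg.mpr hu.2) hu.1 (sub_add_cancel 1 u)
  have hr := hg.2 h0 h1 hu.1 (sub_nonneg.mpr hu.2) (add_sub_cancel u 1)
  simp only [smul_eq_mul, mul_zero, mul_one, zero_add] at hl hr
  linarith

/-- `(1 + x)^k + (1 - x)^k` written as a polynomial in `x²`. -/
noncomputable def evenBinomialSum (k : ℕ) (u : ℝ) : ℝ :=
  ∑ j ∈ Finset.range (k + 1), (if Even j then 2 * (k.choose j : ℝ) else 0) * u ^ (j / 2)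

lemma evenBinomialSum_sq (k : ℕ) (x : ℝ) :
    evenBinomialSum k (x ^ 2) = (1 + x) ^ k + (1 - x) ^ k := by
  rw [sub_eq_add_neg, add_comm 1 x, add_comm 1 (-x), add_pow, add_pow, ← Finset.sum_add_distrib,
    evenBinomialSum]
  refine Finset.sum_congr rfl fun j _ => ?_
  rcases Nat.even_or_odd j with he | ho
  · rw [if_pos he, ← pow_mul, Nat.mul_div_cancel' he.two_dvd, he.neg_pow]
    ring
  · rw [if_neg (Nat.not_even_iff_odd.mpr ho), ho.neg_pow]
    ring

lemma convexOn_evenBinomialSum (k : ℕ) : ConvexOn ℝ (Ici 0) (evenBinomialSum k) :=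
  convexOn_sum_mul_pow _ _ fun j _ => by split_ifs <;> positivity

lemma evenBinomialSum_zero (k : ℕ) : evenBinomialSum k 0 = 2 := by
  simpa [one_add_one_eq_two] using evenBinomialSum_sq k 0

lemma evenBinomialSum_one {k : ℕ} (hk : k ≠ 0) : evenBinomialSum k 1 = 2 ^ k := by
  simpa [zero_pow hk, one_add_one_eq_two] using evenBinomialSum_sq k 1

lemma evenBinomialSum_sq_add_one_sub_sq (k : ℕ) {t : ℝ} (ht : t ^ 2 ≤ 1) :
    evenBinomialSum k (t ^ 2) + evenBinomialSum k (1 - t ^ 2) = (1 + t) ^ k + (1 - t) ^ k +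
      (1 + √(1 - t ^ 2)) ^ k + (1 - √(1 - t ^ 2)) ^ k := by
  have hs := sq_sqrt (sub_nonneg.mpr ht)
  rw [← hs, evenBinomialSum_sq, evenBinomialSum_sq, hs]
  ring

/-- For `k ≥ 4` and `f̃(t;k) = (1+t)^k + (1-t)^k + (1+√(1-t²))^k + (1-√(1-t²))^k`,
for all `t ∈ [0,1]`: `2((1+1/√2)^k + (1-1/√2)^k) ≤ f̃(t;k) ≤ 2^k + 2`, the lower
bound being attained at `t = 1/√2` and the upper bound at `t = 0` and `t = 1`. -/
theorem stmt11 (k : ℕ) (hk : 4 ≤ k)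
    (f : ℝ → ℝ)
    (hdef : ∀ t, f t = (1 + t) ^ k + (1 - t) ^ k +
      (1 + Real.sqrt (1 - t ^ 2)) ^ k + (1 - Real.sqrt (1 - t ^ 2)) ^ k) :
    (∀ t ∈ Icc (0 : ℝ) 1,
      2 * ((1 + 1 / Real.sqrt 2) ^ k + (1 - 1 / Real.sqrt 2) ^ k) ≤ f t ∧
      f t ≤ 2 ^ k + 2) ∧
    f (1 / Real.sqrt 2) = 2 * ((1 + 1 / Real.sqrt 2) ^ k + (1 - 1 / Real.sqrt 2) ^ k) ∧
    f 0 = 2 ^ k + 2 ∧ f 1 = 2 ^ k + 2 := by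
  have hconv : ConvexOn ℝ (Icc 0 1) (evenBinomialSum k) :=
    (convexOn_evenBinomialSum k).subset Icc_subset_Ici_self (convex_Icc 0 1)
  have hf : ∀ t, t ^ 2 ≤ 1 → f t = evenBinomialSum k (t ^ 2) + evenBinomialSum k (1 - t ^ 2) :=
    fun t ht => (hdef t).trans (evenBinomialSum_sq_add_one_sub_sq k ht).symm
  have hhalf : (1 / √2) ^ 2 = (1 / 2 : ℝ) := by rw [div_pow, one_pow, sq_sqrt zero_le_two]
  have hmin : 2 * ((1 + 1 / √2) ^ k + (1 - 1 / √2) ^ k) = 2 * evenBinomialSum k (1 / 2) := by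
    rw [← hhalf, evenBinomialSum_sq]
  have hmax : 2 ^ k + 2 = evenBinomialSum k 0 + evenBinomialSum k 1 := by
    rw [evenBinomialSum_zero, evenBinomialSum_one (by omega), add_comm]
  refine ⟨fun t ht => ?_, ?_, ?_, ?_⟩
  · have hu : t ^ 2 ∈ Icc (0 : ℝ) 1 := ⟨sq_nonneg t, pow_le_one₀ ht.1 ht.2⟩
    rw [hf t hu.2, hmin, hmax]
    exact ⟨hconv.two_mul_half_le_add_one_sub hu, hconv.add_one_sub_le hu⟩
  · rw [hf _ (by rw [hhalf]; norm_num), hmin, hhalf]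
    norm_num
    ring
  · rw [hf 0 (by norm_num), hmax]
    norm_num
  · rw [hf 1 (by norm_num), hmax]
    norm_num
    ring
end

section
/- For every τ ∈ (0,1), the Jacobi theta function value ϑ₃(iτ) = ∑_{m∈ℤ} e^{-π m² τ} satisfies ϑ₃(iτ) < τ^{-1/2} + e^{-(π-1)/τ}. -/
/-!
By Poisson summation `ϑ₃(iτ) = τ^{-1/2} ∑_{n∈ℤ} q^{n²}` with `q = e^{-π/τ}`, and `n² ≥ |n|`
bounds this by `τ^{-1/2} (1 + 2q/(1-q))`. It remains to see `2 τ^{-1/2} < (1-q) e^{1/τ}`: since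
`τ^{-1/2} ≤ 1/τ ≤ e^{1/τ-1}` and `q ≤ e^{-2}` for `τ ≤ 1`, this follows from `2/e + e^{-2} < 1`.
-/
open Real Set

section GaussianSum

variable {c : ℝ}

lemma exp_neg_mul_sq_le_exp_neg_pow (hc : 0 ≤ c) (n : ℕ) :
    exp (-c * (n : ℝ) ^ 2) ≤ exp (-c) ^ n := by
  rw [← exp_nat_mul]
  have hn : (n : ℝ) ≤ (n : ℝ) ^ 2 := by exact_mod_cast Nat.le_self_pow two_ne_zero n
  exact exp_le_exp.mpr (by nlinarith)

lemma summable_exp_neg_mul_nat_sq (hc : 0 < c) :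
    Summable fun n : ℕ => exp (-c * (n : ℝ) ^ 2) :=
  (summable_geometric_of_lt_one (exp_pos _).le (exp_lt_one_iff.mpr (neg_lt_zero.mpr hc))
    ).of_nonneg_of_le (fun _ => (exp_pos _).le) (exp_neg_mul_sq_le_exp_neg_pow hc.le)

lemma summable_exp_neg_mul_int_sq (hc : 0 < c) :
    Summable fun n : ℤ => exp (-c * (n : ℝ) ^ 2) :=
  .of_nat_of_neg (by simpa using summable_exp_neg_mul_nat_sq hc)
    (by simpa using summable_exp_neg_mul_nat_sq hc)

lemma tsum_pnat_exp_neg_mul_sq_le (hc : 0 < c) :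
    ∑' n : ℕ+, exp (-c * (n : ℝ) ^ 2) ≤ exp (-c) / (1 - exp (-c)) := by
  have hq : exp (-c) < 1 := exp_lt_one_iff.mpr (neg_lt_zero.mpr hc)
  have hgeom := summable_geometric_of_lt_one (exp_pos (-c)).le hq
  rw [tsum_pnat_eq_tsum_succ (f := fun n : ℕ => exp (-c * (n : ℝ) ^ 2))]
  calc ∑' n : ℕ, exp (-c * ((n + 1 : ℕ) : ℝ) ^ 2)
      ≤ ∑' n : ℕ, exp (-c) * exp (-c) ^ n :=
        (summable_nat_add_iff 1 |>.mpr (summable_exp_neg_mul_nat_sq hc)).tsum_le_tsum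
          (fun n => pow_succ' (exp (-c)) n ▸ exp_neg_mul_sq_le_exp_neg_pow hc.le (n + 1))
          (hgeom.mul_left _)
    _ = exp (-c) / (1 - exp (-c)) := by
        rw [tsum_mul_left, tsum_geometric_of_lt_one (exp_pos _).le hq, div_eq_mul_inv]

lemma tsum_int_exp_neg_mul_sq_le (hc : 0 < c) :
    ∑' n : ℤ, exp (-c * (n : ℝ) ^ 2) ≤ 1 + 2 * (exp (-c) / (1 - exp (-c))) := by
  rw [tsum_int_eq_zero_add_two_mul_tsum_pnat (fun n => by simp) (summable_exp_neg_mul_int_sq hc)]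
  simpa using tsum_pnat_exp_neg_mul_sq_le hc

end GaussianSum

lemma rpow_neg_half_mul_exp_neg_inv_le {τ : ℝ} (h0 : 0 < τ) (h1 : τ ≤ 1) :
    τ ^ (-(1 : ℝ) / 2) * exp (-1 / τ) ≤ exp (-1) := by
  have hpow : τ ^ (-(1 : ℝ) / 2) ≤ 1 / τ := by
    rw [one_div, ← rpow_neg_one]
    exact rpow_le_rpow_of_exponent_ge h0 h1 (by norm_num)
  calc τ ^ (-(1 : ℝ) / 2) * exp (-1 / τ) ≤ exp (1 / τ - 1) * exp (-1 / τ) := by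
        gcongr
        linarith [add_one_le_exp (1 / τ - 1)]
    _ = exp (-1) := by rw [← exp_add]; ring_nf

lemma two_mul_exp_neg_one_add_exp_neg_two_lt_one : 2 * exp (-1) + exp (-2) < 1 := by
  have he : exp (-1) < 0.4 := by
    rw [exp_neg, inv_lt_comm₀ (exp_pos 1) (by norm_num)]
    linarith [exp_one_gt_d9]
  have he2 : exp (-2) = exp (-1) ^ 2 := by rw [← exp_nat_mul]; norm_num
  nlinarith [exp_pos (-1)]

lemma two_mul_rpow_neg_half_lt {τ : ℝ} (h0 : 0 < τ) (h1 : τ ≤ 1) :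
    2 * τ ^ (-(1 : ℝ) / 2) < (1 - exp (-(π / τ))) * exp (1 / τ) := by
  have hq : exp (-(π / τ)) ≤ exp (-2) := by
    gcongr
    rw [le_div_iff₀ h0]
    nlinarith [pi_gt_three]
  calc 2 * τ ^ (-(1 : ℝ) / 2)
      = 2 * (τ ^ (-(1 : ℝ) / 2) * exp (-1 / τ)) * exp (1 / τ) := by
        rw [mul_assoc 2, mul_assoc, ← exp_add]; ring_nf; rw [exp_zero, mul_one]
    _ ≤ 2 * exp (-1) * exp (1 / τ) := by gcongr; exact rpow_neg_half_mul_exp_neg_inv_le h0 h1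
    _ < (1 - exp (-2)) * exp (1 / τ) := by
        gcongr; linarith [two_mul_exp_neg_one_add_exp_neg_two_lt_one]
    _ ≤ (1 - exp (-(π / τ))) * exp (1 / τ) := by gcongr

/-- For `τ ∈ (0,1)`, the Jacobi theta value `ϑ₃(iτ) = ∑_{m∈ℤ} e^{-π m² τ}` satisfies
`ϑ₃(iτ) < τ^{-1/2} + e^{-(π-1)/τ}`. -/
theorem stmt15 (τ : ℝ) (hτ : τ ∈ Ioo (0 : ℝ) 1) :
    (∑' m : ℤ, Real.exp (-π * (m : ℝ) ^ 2 * τ)) <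
      τ ^ (-(1 : ℝ) / 2) + Real.exp (-(π - 1) / τ) := by
  have h0 := hτ.1
  have hpoisson : ∑' m : ℤ, exp (-π * (m : ℝ) ^ 2 * τ) =
      τ ^ (-(1 : ℝ) / 2) * ∑' n : ℤ, exp (-(π / τ) * (n : ℝ) ^ 2) := by
    rw [neg_div, rpow_neg h0.le, inv_eq_one_div, ← neg_div]
    simpa only [mul_right_comm _ _ τ, neg_div] using tsum_exp_neg_mul_int_sq h0
  have htail := two_mul_rpow_neg_half_lt h0 hτ.2.le
  set r := τ ^ (-(1 : ℝ) / 2)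
  set q := exp (-(π / τ))
  have h1q : 0 < 1 - q := sub_pos.mpr (exp_lt_one_iff.mpr (neg_lt_zero.mpr (div_pos pi_pos h0)))
  calc ∑' m : ℤ, exp (-π * (m : ℝ) ^ 2 * τ)
      = r * ∑' n : ℤ, exp (-(π / τ) * (n : ℝ) ^ 2) := hpoisson
    _ ≤ r * (1 + 2 * (q / (1 - q))) := by
        gcongr; exact tsum_int_exp_neg_mul_sq_le (div_pos pi_pos h0)
    _ = r + 2 * r * q / (1 - q) := by ring
    _ < r + (1 - q) * exp (1 / τ) * q / (1 - q) := by gcongr r + ?_ * q / _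
    _ = r + exp (-(π - 1) / τ) := by
        field_simp; rw [← exp_add]; ring_nf
end

section
/- For τ ∈ (0,1): 2 τ^{-1/2} ∑_{m=1}^{∞} e^{-π m²/τ} < e^{-(π-1)/τ}. In particular, the tail estimate ∑_{m=1}^∞ e^{-π m²/τ} ≤ e^{-π/τ} · ∑_{m=1}^∞ e^{-3π(m-1)/τ} ≤ e^{-π/τ} · (1 + ∑_{m=2}^∞ 3^{-m}) holds using e^{-3π/τ} < 1/3. -/
open Real Set

/-! Comparing exponents, `(m + 1)² ≥ 1 + 3m`, so the theta tail `∑_{m ≥ 1} e^{-π m²/τ}` is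
dominated by `e^{-π/τ}` times the geometric series of ratio `a = e^{-3π/τ}`. For `τ ≤ 1` we have
`a ≤ 1/7`, so that series is at most `7/6 = 1 + ∑_{m ≥ 2} 3^{-m}`. The first claim then follows
from `τ^{-1/2} ≤ τ⁻¹` and `(7/3) x < e^x`. -/

theorem hasSum_exp_neg_mul_nat_div {c τ : ℝ} (hc : 0 < c) (hτ : 0 < τ) :
    HasSum (fun m : ℕ => exp (-c * m / τ)) (1 - exp (-c / τ))⁻¹ := by
  have hpow (m : ℕ) : exp (-c * m / τ) = exp (-c / τ) ^ m := by
    rw [← exp_nat_mul]; ring_nf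
  simp only [hpow]
  exact hasSum_geometric_of_lt_one (exp_pos _).le
    (exp_lt_one_iff.mpr (div_neg_of_neg_of_pos (neg_neg_of_pos hc) hτ))

theorem exp_neg_mul_succ_sq_div_le {c τ : ℝ} (hc : 0 ≤ c) (hτ : 0 ≤ τ) (m : ℕ) :
    exp (-c * ((m : ℝ) + 1) ^ 2 / τ) ≤ exp (-c / τ) * exp (-3 * c * m / τ) := by
  rw [← exp_add, exp_le_exp, ← add_div]
  apply div_le_div_of_nonneg_right _ hτ
  have hm : (m : ℝ) ≤ (m : ℝ) ^ 2 := by exact_mod_cast Nat.le_self_pow two_ne_zero m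
  nlinarith

theorem tsum_exp_neg_mul_succ_sq_div_le {c τ : ℝ} (hc : 0 < c) (hτ : 0 < τ) :
    ∑' m : ℕ, exp (-c * ((m : ℝ) + 1) ^ 2 / τ) ≤
      exp (-c / τ) * ∑' m : ℕ, exp (-3 * c * m / τ) := by
  have hgeom : Summable fun m : ℕ => exp (-3 * c * m / τ) := by
    simpa only [neg_mul] using (hasSum_exp_neg_mul_nat_div (by positivity) hτ).summable
  have hle := exp_neg_mul_succ_sq_div_le hc.le hτ.le
  rw [← tsum_mul_left]
  have hdom := hgeom.mul_left (exp (-c / τ))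
  exact (hdom.of_nonneg_of_le (fun _ => (exp_pos _).le) hle).tsum_le_tsum hle hdom

theorem exp_neg_three_pi_div_le {τ : ℝ} (hτ0 : 0 < τ) (hτ1 : τ ≤ 1) :
    exp (-3 * π / τ) ≤ 1 / 7 := by
  have h9 : 9 ≤ 3 * π / τ := by
    rw [le_div_iff₀ hτ0]; nlinarith [pi_gt_three]
  rw [neg_mul, neg_div, exp_neg, one_div]
  gcongr
  linarith [add_one_le_exp (3 * π / τ)]

theorem tsum_one_third_pow_add_two : ∑' m : ℕ, ((1 : ℝ) / 3) ^ (m + 2) = 1 / 6 := by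
  simp only [pow_add, tsum_mul_right]
  rw [tsum_geometric_of_lt_one (by norm_num) (by norm_num)]
  norm_num

theorem rpow_neg_one_half_le_one_div {τ : ℝ} (hτ0 : 0 < τ) (hτ1 : τ ≤ 1) :
    τ ^ (-(1 : ℝ) / 2) ≤ 1 / τ := by
  rw [one_div, ← rpow_neg_one]
  exact rpow_le_rpow_of_exponent_ge hτ0 hτ1 (by norm_num)

theorem seven_thirds_mul_lt_exp {x : ℝ} (hx : 0 ≤ x) : 7 / 3 * x < exp x := by
  nlinarith [quadratic_le_exp_of_nonneg hx, sq_nonneg (x - 4 / 3)]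

/-- For `τ ∈ (0,1)`: `2 τ^{-1/2} ∑_{m=1}^∞ e^{-π m²/τ} < e^{-(π-1)/τ}`, together with
the tail estimates `∑_{m=1}^∞ e^{-π m²/τ} ≤ e^{-π/τ} ∑_{m=1}^∞ e^{-3π(m-1)/τ}`
and `e^{-π/τ} ∑_{m=1}^∞ e^{-3π(m-1)/τ} ≤ e^{-π/τ}(1 + ∑_{m=2}^∞ 3^{-m})`. -/
theorem stmt16 (τ : ℝ) (hτ : τ ∈ Ioo (0 : ℝ) 1) :
    2 * τ ^ (-(1 : ℝ) / 2) * (∑' m : ℕ, Real.exp (-π * ((m : ℝ) + 1) ^ 2 / τ)) <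
      Real.exp (-(π - 1) / τ) ∧
    (∑' m : ℕ, Real.exp (-π * ((m : ℝ) + 1) ^ 2 / τ)) ≤
      Real.exp (-π / τ) * (∑' m : ℕ, Real.exp (-3 * π * (m : ℝ) / τ)) ∧
    Real.exp (-π / τ) * (∑' m : ℕ, Real.exp (-3 * π * (m : ℝ) / τ)) ≤
      Real.exp (-π / τ) * (1 + ∑' m : ℕ, ((1 : ℝ) / 3) ^ (m + 2)) := by
  obtain ⟨hτ0, hτ1⟩ := hτ
  have htail := tsum_exp_neg_mul_succ_sq_div_le pi_pos hτ0
  have hgeom : ∑' m : ℕ, exp (-3 * π * m / τ) ≤ 1 + ∑' m : ℕ, ((1 : ℝ) / 3) ^ (m + 2) := by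
    have hsum := hasSum_exp_neg_mul_nat_div (mul_pos three_pos pi_pos) hτ0
    simp only [← neg_mul] at hsum
    rw [hsum.tsum_eq, tsum_one_third_pow_add_two, inv_le_comm₀] <;>
      linarith [exp_neg_three_pi_div_le hτ0 hτ1.le]
  have hbound := htail.trans (mul_le_mul_of_nonneg_left hgeom (exp_pos _).le)
  rw [tsum_one_third_pow_add_two] at hbound
  refine ⟨?_, htail, mul_le_mul_of_nonneg_left hgeom (exp_pos _).le⟩
  calc 2 * τ ^ (-(1 : ℝ) / 2) * ∑' m : ℕ, exp (-π * ((m : ℝ) + 1) ^ 2 / τ)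
      ≤ 2 * (1 / τ) * (exp (-π / τ) * (1 + 1 / 6)) :=
        mul_le_mul (by gcongr; exact rpow_neg_one_half_le_one_div hτ0 hτ1.le) hbound
          (tsum_nonneg fun _ => (exp_pos _).le) (by positivity)
    _ = 7 / 3 * (1 / τ) * exp (-π / τ) := by ring
    _ < exp (1 / τ) * exp (-π / τ) := by
        gcongr
        exact seven_thirds_mul_lt_exp (by positivity)
    _ = exp (-(π - 1) / τ) := by rw [← exp_add]; ring_nf
end
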